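/- Let A and B be separable C*-algebras and suppose B is the limit of an inductive system (B_n, β_n) of C*-algebras. If α: A → B is a semiprojective *-homomorphism, then there exist an integer n ≥ 1 and a *-homomorphism α̃: A → B_n such that β_{∞,n} ∘ α̃ is homotopic to α. -/

import Mathlib

open Filter Topology Set
open scoped NNReal ZeroAtInfty OnePoint CStarAlgebra

noncomputable section

namespace AsymPaper

universe u v w

section Basic

variable {A : Type*} {B : Type*} {D : Type*} {A' : Type*} {A₀ : Type*}
variable [NonUnitalCStarAlgebra A] [NonUnitalCStarAlgebra B] [NonUnitalCStarAlgebra D]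
variable [NonUnitalCStarAlgebra A'] [NonUnitalCStarAlgebra A₀]

/-- An asymptotic morphism `A ⇒ B` is a family of self-adjoint (ℂ-linear and star-preserving)
maps `φ_t : A → B`, continuous in `t`, which is asymptotically multiplicative. -/
def IsAsymptoticMorphism (φ : ℝ≥0 → A → B) : Prop :=
  (∀ t, IsLinearMap ℂ (φ t)) ∧ (∀ t a, φ t (star a) = star (φ t a)) ∧
    (∀ a, Continuous fun t => φ t a) ∧
    (∀ a b : A, Tendsto (fun t => ‖φ t (a * b) - φ t a * φ t b‖) atTop (𝓝 0))

/-- Equivalence of asymptotic morphisms: `φ_t(a) - ψ_t(a) → 0` for every `a`. -/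
def AsympEquiv (φ ψ : ℝ≥0 → A → B) : Prop :=
  ∀ a, Tendsto (fun t => ‖φ t a - ψ t a‖) atTop (𝓝 0)

/-- Asymptotic homotopy of asymptotic morphisms `A ⇒ B`, witnessed by an asymptotic
morphism `A ⇒ C([0,1], B)`. -/
def AsympHomotopic (φ ψ : ℝ≥0 → A → B) : Prop :=
  ∃ θ : ℝ≥0 → A → C(unitInterval, B), IsAsymptoticMorphism θ ∧
    AsympEquiv (fun t a => θ t a 0) φ ∧ AsympEquiv (fun t a => θ t a 1) ψ

end Basic

/-- A bundled asymptotic morphism. -/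
structure AsymptoticMorphism (A : Type u) (B : Type v)
    [NonUnitalCStarAlgebra A] [NonUnitalCStarAlgebra B] : Type (max u v) where
  toFun : ℝ≥0 → A → B
  isAsymptoticMorphism : IsAsymptoticMorphism toFun

section Classes

variable {A : Type*} {B : Type*} {D : Type*} {A' : Type*} {A₀ : Type*}
variable [NonUnitalCStarAlgebra A] [NonUnitalCStarAlgebra B] [NonUnitalCStarAlgebra D]
variable [NonUnitalCStarAlgebra A'] [NonUnitalCStarAlgebra A₀]

/-- The relation of asymptotic homotopy on bundled asymptotic morphisms. -/
def AsympRel (φ ψ : AsymptoticMorphism A B) : Prop := AsympHomotopic φ.toFun ψ.toFun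

end Classes

/-- `[[A, B]]`: homotopy classes of asymptotic morphisms from `A` to `B`. -/
def AsympClass (A : Type u) (B : Type v)
    [NonUnitalCStarAlgebra A] [NonUnitalCStarAlgebra B] : Type (max u v) :=
  Quot (@AsympRel A B _ _)

section Classes2

variable {A : Type*} {B : Type*} {D : Type*} {A' : Type*} {A₀ : Type*}
variable [NonUnitalCStarAlgebra A] [NonUnitalCStarAlgebra B] [NonUnitalCStarAlgebra D]
variable [NonUnitalCStarAlgebra A'] [NonUnitalCStarAlgebra A₀]

/-- `[[φ]]`, the asymptotic homotopy class of an asymptotic morphism. -/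
def AsympClass.mk (φ : AsymptoticMorphism A B) : AsympClass A B := Quot.mk _ φ

/-- A ⋆-homomorphism viewed as a (constant) family of maps. -/
def constFun (f : A →⋆ₙₐ[ℂ] B) : ℝ≥0 → A → B := fun _ a => f a

theorem isAsymptoticMorphism_constFun (f : A →⋆ₙₐ[ℂ] B) :
    IsAsymptoticMorphism (constFun f) := by
  refine ⟨fun t => ⟨fun x y => map_add f x y, fun c x => map_smul f c x⟩,
    fun t a => map_star f a, fun a => continuous_const, fun a b => ?_⟩
  simp only [constFun, map_mul, sub_self, norm_zero]
  exact tendsto_const_nhds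

/-- A ⋆-homomorphism viewed as a (constant) asymptotic morphism. -/
def constAM (f : A →⋆ₙₐ[ℂ] B) : AsymptoticMorphism A B :=
  ⟨constFun f, isAsymptoticMorphism_constFun f⟩

/-- The class `[[f]] ∈ [[A, B]]` of a ⋆-homomorphism. -/
def constClass (f : A →⋆ₙₐ[ℂ] B) : AsympClass A B := AsympClass.mk (constAM f)

/-- Precomposition of a family of maps with a ⋆-homomorphism. -/
def compHomFun {B : Type*} (φ : ℝ≥0 → A → B) (γ : A' →⋆ₙₐ[ℂ] A) : ℝ≥0 → A' → B :=
  fun t a => φ t (γ a)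

theorem IsAsymptoticMorphism.compHomFun {φ : ℝ≥0 → A → B} (hφ : IsAsymptoticMorphism φ)
    (γ : A' →⋆ₙₐ[ℂ] A) : IsAsymptoticMorphism (AsymPaper.compHomFun φ γ) := by
  obtain ⟨h1, h2, h3, h4⟩ := hφ
  refine ⟨fun t => ⟨fun x y => ?_, fun c x => ?_⟩, fun t a => ?_, fun a => h3 (γ a),
    fun a b => ?_⟩
  · show φ t (γ (x + y)) = φ t (γ x) + φ t (γ y)
    rw [map_add]; exact (h1 t).map_add _ _
  · show φ t (γ (c • x)) = c • φ t (γ x)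
    rw [map_smul]; exact (h1 t).map_smul _ _
  · show φ t (γ (star a)) = star (φ t (γ a))
    rw [map_star]; exact h2 t _
  · show Tendsto (fun t => ‖φ t (γ (a * b)) - φ t (γ a) * φ t (γ b)‖) atTop (𝓝 0)
    simpa only [map_mul] using h4 (γ a) (γ b)

theorem AsympHomotopic.compHomFun {φ ψ : ℝ≥0 → A → B} (h : AsympHomotopic φ ψ)
    (γ : A' →⋆ₙₐ[ℂ] A) :
    AsympHomotopic (AsymPaper.compHomFun φ γ) (AsymPaper.compHomFun ψ γ) := by
  obtain ⟨θ, hθ, h0, h1⟩ := h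
  exact ⟨AsymPaper.compHomFun θ γ, hθ.compHomFun γ, fun a => h0 (γ a), fun a => h1 (γ a)⟩

/-- Precomposition of an asymptotic morphism with a ⋆-homomorphism. -/
def AsymptoticMorphism.compHom (φ : AsymptoticMorphism A B) (γ : A' →⋆ₙₐ[ℂ] A) :
    AsymptoticMorphism A' B :=
  ⟨AsymPaper.compHomFun φ.toFun γ, φ.isAsymptoticMorphism.compHomFun γ⟩

/-- The map `[[A, B]] → [[A', B]]` induced by precomposition with a ⋆-homomorphism. -/
def compClassMap (γ : A' →⋆ₙₐ[ℂ] A) : AsympClass A B → AsympClass A' B :=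
  Quot.lift (fun φ => AsympClass.mk (φ.compHom γ))
    (fun φ ψ h => Quot.sound (AsympHomotopic.compHomFun h γ))

/-- Postcomposition of a family of maps with a ⋆-homomorphism. -/
def postHomFun {A : Type*} (ψ : B →⋆ₙₐ[ℂ] D) (φ : ℝ≥0 → A → B) : ℝ≥0 → A → D :=
  fun t a => ψ (φ t a)

theorem IsAsymptoticMorphism.postHomFun {φ : ℝ≥0 → A → B} (hφ : IsAsymptoticMorphism φ)
    (ψ : B →⋆ₙₐ[ℂ] D) : IsAsymptoticMorphism (AsymPaper.postHomFun ψ φ) := by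
  obtain ⟨h1, h2, h3, h4⟩ := hφ
  refine ⟨fun t => ⟨fun x y => ?_, fun c x => ?_⟩, fun t a => ?_,
    fun a => (map_continuous ψ).comp (h3 a), fun a b => ?_⟩
  · show ψ (φ t (x + y)) = ψ (φ t x) + ψ (φ t y)
    rw [(h1 t).map_add, map_add]
  · show ψ (φ t (c • x)) = c • ψ (φ t x)
    rw [(h1 t).map_smul, map_smul]
  · show ψ (φ t (star a)) = star (ψ (φ t a))
    rw [h2, map_star]
  · refine squeeze_zero (fun t => norm_nonneg _) (fun t => ?_) (h4 a b)
    show ‖ψ (φ t (a * b)) - ψ (φ t a) * ψ (φ t b)‖ ≤ _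
    rw [← map_mul, ← map_sub]
    exact NonUnitalStarAlgHom.norm_apply_le ψ _

theorem AsympEquiv.postHomFun {φ φ' : ℝ≥0 → A → B} (h : AsympEquiv φ φ')
    (ψ : B →⋆ₙₐ[ℂ] D) : AsympEquiv (AsymPaper.postHomFun ψ φ) (AsymPaper.postHomFun ψ φ') := by
  intro a
  refine squeeze_zero (fun t => norm_nonneg _) (fun t => ?_) (h a)
  show ‖ψ (φ t a) - ψ (φ' t a)‖ ≤ _
  rw [← map_sub]
  exact NonUnitalStarAlgHom.norm_apply_le ψ _

/-- Pointwise postcomposition on continuous maps, as a ⋆-homomorphism. -/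
def cmPostHom {X : Type*} [TopologicalSpace X] (ψ : B →⋆ₙₐ[ℂ] D) :
    C(X, B) →⋆ₙₐ[ℂ] C(X, D) where
  toFun f := ⟨fun x => ψ (f x), (map_continuous ψ).comp f.continuous⟩
  map_smul' c f := by ext x; simp
  map_zero' := by ext x; simp
  map_add' f g := by ext x; simp
  map_mul' f g := by ext x; simp
  map_star' f := by ext x; simp [map_star]

theorem AsympHomotopic.postHomFun {φ φ' : ℝ≥0 → A → B} (h : AsympHomotopic φ φ')
    (ψ : B →⋆ₙₐ[ℂ] D) :
    AsympHomotopic (AsymPaper.postHomFun ψ φ) (AsymPaper.postHomFun ψ φ') := by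
  obtain ⟨θ, hθ, h0, h1⟩ := h
  exact ⟨AsymPaper.postHomFun (cmPostHom ψ) θ, hθ.postHomFun _,
    fun a => AsympEquiv.postHomFun h0 ψ a, fun a => AsympEquiv.postHomFun h1 ψ a⟩

/-- The map `[[A, B]] → [[A, D]]` induced by postcomposition with a ⋆-homomorphism. -/
def postClassMap (ψ : B →⋆ₙₐ[ℂ] D) : AsympClass A B → AsympClass A D :=
  Quot.lift
    (fun φ => AsympClass.mk ⟨AsymPaper.postHomFun ψ φ.toFun, φ.isAsymptoticMorphism.postHomFun ψ⟩)
    (fun φ φ' h => Quot.sound (AsympHomotopic.postHomFun h ψ))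

/-- Genuine homotopy of ⋆-homomorphisms. -/
def HomHomotopic (φ ψ : A →⋆ₙₐ[ℂ] B) : Prop :=
  ∃ H : A →⋆ₙₐ[ℂ] C(unitInterval, B), (∀ a, H a 0 = φ a) ∧ (∀ a, H a 1 = ψ a)

/-- The relation on ⋆-homomorphisms of being asymptotically homotopic
(as constant asymptotic morphisms). -/
def HRel (f g : A →⋆ₙₐ[ℂ] B) : Prop := AsympHomotopic (constFun f) (constFun g)

/-- The point-norm topology on the space of ⋆-homomorphisms. -/
instance homTopology : TopologicalSpace (A →⋆ₙₐ[ℂ] B) :=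
  TopologicalSpace.induced (fun f => (f : A → B)) inferInstance

end Classes2

/-- `H(A, B)`: the image of `Hom(A,B)` in `[[A,B]]`, realized as the quotient of `Hom(A, B)` by
asymptotic homotopy; it carries the quotient topology coming from the point-norm topology. -/
def HClass (A : Type u) (B : Type v) [NonUnitalCStarAlgebra A] [NonUnitalCStarAlgebra B] :
    Type (max u v) :=
  Quot (@HRel A B _ _)

section Classes3

variable {A : Type*} {B : Type*} {D : Type*} {A' : Type*} {A₀ : Type*}
variable [NonUnitalCStarAlgebra A] [NonUnitalCStarAlgebra B] [NonUnitalCStarAlgebra D]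
variable [NonUnitalCStarAlgebra A'] [NonUnitalCStarAlgebra A₀]

instance HClass.instTopologicalSpace (A : Type u) (B : Type v)
    [NonUnitalCStarAlgebra A] [NonUnitalCStarAlgebra B] : TopologicalSpace (HClass A B) :=
  inferInstanceAs (TopologicalSpace (Quot (@HRel A B _ _)))

/-- The class in `H(A, B)` of a ⋆-homomorphism. -/
def HClass.mk (f : A →⋆ₙₐ[ℂ] B) : HClass A B := Quot.mk _ f

/-- The map `H(A, B) → H(A', B)` induced by precomposition with a ⋆-homomorphism. -/
def hcompClassMap (γ : A' →⋆ₙₐ[ℂ] A) : HClass A B → HClass A' B :=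
  Quot.lift (fun f => HClass.mk (f.comp γ))
    (fun f g h => Quot.sound (AsympHomotopic.compHomFun h γ))

/-- The zero ⋆-homomorphism. -/
def zeroHom (A B : Type*) [NonUnitalCStarAlgebra A] [NonUnitalCStarAlgebra B] :
    A →⋆ₙₐ[ℂ] B where
  toFun _ := 0
  map_smul' _ _ := by simp
  map_zero' := rfl
  map_add' _ _ := by simp
  map_mul' _ _ := by simp
  map_star' _ := by simp

end Classes3

section Systems

/-- The transition maps of an inductive system. -/
def transit {A : ℕ → Type u} [∀ n, NonUnitalCStarAlgebra (A n)]
    (α : ∀ n, A n →⋆ₙₐ[ℂ] A (n + 1)) {n m : ℕ} (hnm : n ≤ m) (a : A n) : A m :=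
  Nat.leRecOn hnm (fun {k} x => α k x) a

/-- `(L, ι)` is the inductive limit of the system `(A, α)`: the maps are compatible, the union of
their ranges is dense, and the norm of `ι n a` is the limit of the norms along the system. -/
def IsInductiveLimit {A : ℕ → Type u} [∀ n, NonUnitalCStarAlgebra (A n)]
    (α : ∀ n, A n →⋆ₙₐ[ℂ] A (n + 1)) (L : Type v) [NonUnitalCStarAlgebra L]
    (ι : ∀ n, A n →⋆ₙₐ[ℂ] L) : Prop :=
  (∀ n, (ι (n + 1)).comp (α n) = ι n) ∧
    Dense (⋃ n, Set.range (ι n)) ∧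
    ∀ (n : ℕ) (a : A n),
      Tendsto (fun m => ‖transit α (Nat.le_add_right n m) a‖) atTop (𝓝 ‖ι n a‖)

/-- A ⋆-homomorphism `α : A₀ → A` is semiprojective if for every inductive system with surjective
connecting maps and limit `L` and every ⋆-homomorphism `φ : A → L`, the composition `φ ∘ α`
lifts to some finite stage of the system. -/
def IsSemiprojective.{w₁, u₁, v₁} {A₀ : Type u₁} {A : Type v₁}
    [NonUnitalCStarAlgebra A₀] [NonUnitalCStarAlgebra A] (α : A₀ →⋆ₙₐ[ℂ] A) : Prop :=
  ∀ (B : ℕ → Type w₁) [∀ n, NonUnitalCStarAlgebra (B n)]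
    (β : ∀ n, B n →⋆ₙₐ[ℂ] B (n + 1)) (L : Type w₁) [NonUnitalCStarAlgebra L]
    (ι : ∀ n, B n →⋆ₙₐ[ℂ] L),
    (∀ n, Function.Surjective (β n)) → IsInductiveLimit β L ι →
      ∀ φ : A →⋆ₙₐ[ℂ] L, ∃ (n : ℕ) (ψ : A₀ →⋆ₙₐ[ℂ] B n), (ι n).comp ψ = φ.comp α

end Systems

/-- A separable C⋆-algebra together with a semiprojective ⋆-homomorphism into `A`. -/
structure SemiprojectivePair (A : Type u) [NonUnitalCStarAlgebra A] : Type (u + 1) where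
  carrier : Type u
  [inst : NonUnitalCStarAlgebra carrier]
  [sep : TopologicalSpace.SeparableSpace carrier]
  hom : carrier →⋆ₙₐ[ℂ] A
  semiproj : IsSemiprojective.{u} hom

attribute [instance] SemiprojectivePair.inst SemiprojectivePair.sep

/-- A bundled separable C⋆-algebra. -/
structure SeparableCStarAlgebra : Type (u + 1) where
  carrier : Type u
  [inst : NonUnitalCStarAlgebra carrier]
  [sep : TopologicalSpace.SeparableSpace carrier]

attribute [instance] SeparableCStarAlgebra.inst SeparableCStarAlgebra.sep

section Pullback

variable {A : Type u} {A' : Type*} {B : Type v}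
variable [NonUnitalCStarAlgebra A] [NonUnitalCStarAlgebra A'] [NonUnitalCStarAlgebra B]

/-- For a semiprojective `γ : A' → A`, every class in `[[A, B]]` composed with `γ` is represented
by a genuine ⋆-homomorphism; `pullbackH γ` sends the class to the corresponding element of
`H(A', B)`.  (For non-semiprojective `γ` the junk value `0` is used when no representative
exists.) -/
def pullbackH (γ : A' →⋆ₙₐ[ℂ] A) (x : AsympClass A B) : HClass A' B :=
  @dite _ (∃ f : A' →⋆ₙₐ[ℂ] B, compClassMap γ x = constClass f) (Classical.propDecidable _)
    (fun h => HClass.mk h.choose) (fun _ => HClass.mk (zeroHom A' B))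

end Pullback

/-- The topology on `[[A, B]]`: the weakest topology making `pullbackH α : [[A,B]] → H(A₀,B)`
continuous for every separable C⋆-algebra `A₀` and every semiprojective `α : A₀ → A`. -/
instance AsympClass.topologicalSpace (A : Type u) (B : Type v)
    [NonUnitalCStarAlgebra A] [NonUnitalCStarAlgebra B] :
    TopologicalSpace (AsympClass A B) :=
  ⨅ P : SemiprojectivePair A,
    TopologicalSpace.induced (pullbackH (B := B) P.hom) inferInstance



section InvLim

/-- The inverse (projective) limit of a sequence of spaces, as a subspace of the product. -/
def InvLim (X : ℕ → Type w) (g : ∀ n, X (n + 1) → X n) : Type w :=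
  { x : ∀ n, X n // ∀ n, g n (x (n + 1)) = x n }

instance InvLim.instTopologicalSpace (X : ℕ → Type w) [∀ n, TopologicalSpace (X n)]
    (g : ∀ n, X (n + 1) → X n) : TopologicalSpace (InvLim X g) :=
  inferInstanceAs (TopologicalSpace { x : ∀ n, X n // ∀ n, g n (x (n + 1)) = x n })

end InvLim

section HLim

variable {A : ℕ → Type u} [∀ n, NonUnitalCStarAlgebra (A n)]
variable {B : ℕ → Type v} [∀ n, NonUnitalCStarAlgebra (B n)]
variable {L : Type w} [NonUnitalCStarAlgebra L]

/-- The defining formula for the homotopy limit of a strong homotopy morphism of inductive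
systems: for `a ∈ A n` and `m ≤ t < m + 1` (with `m ≥ n`) the value is
`ι_{f(m+1)} (h_m (α_{m,n} a) (t - m))`. -/
def hLimFormula (α : ∀ n, A n →⋆ₙₐ[ℂ] A (n + 1)) (ιB : ∀ n, B n →⋆ₙₐ[ℂ] L) (f : ℕ → ℕ)
    (h : ∀ n, A n →⋆ₙₐ[ℂ] C(unitInterval, B (f (n + 1)))) (n : ℕ) (a : A n) (t : ℝ≥0) : L :=
  ιB (f (max n ⌊(t : ℝ)⌋₊ + 1))
    (h (max n ⌊(t : ℝ)⌋₊) (transit α (le_max_left n ⌊(t : ℝ)⌋₊) a)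
      (Set.projIcc (0 : ℝ) 1 zero_le_one ((t : ℝ) - (max n ⌊(t : ℝ)⌋₊ : ℕ))))

/-- `φ` is (a representative of) the homotopy limit of the strong homotopy morphism given by
`(f, φ_n, h_n)`: it is an asymptotic morphism agreeing asymptotically with the defining formula
on each `A n`. -/
def IsHomotopyLimit (α : ∀ n, A n →⋆ₙₐ[ℂ] A (n + 1)) {AL : Type*} [NonUnitalCStarAlgebra AL]
    (ιA : ∀ n, A n →⋆ₙₐ[ℂ] AL) (ιB : ∀ n, B n →⋆ₙₐ[ℂ] L) (f : ℕ → ℕ)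
    (h : ∀ n, A n →⋆ₙₐ[ℂ] C(unitInterval, B (f (n + 1)))) (φ : ℝ≥0 → AL → L) : Prop :=
  IsAsymptoticMorphism φ ∧
    ∀ (n : ℕ) (a : A n),
      Tendsto (fun t => ‖φ t (ιA n a) - hLimFormula α ιB f h n a t‖) atTop (𝓝 0)

end HLim

section CH

variable {A : Type u} {B : Type v} {D : Type w}
variable [NonUnitalCStarAlgebra A] [NonUnitalCStarAlgebra B] [NonUnitalCStarAlgebra D]

/-- An (increasing) reparametrization: a homeomorphism of `[0, ∞)`. -/
def IsReparam (r : ℝ≥0 → ℝ≥0) : Prop := ∃ e : ℝ≥0 ≃ₜ ℝ≥0, (e : ℝ≥0 → ℝ≥0) = r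

/-- The composition `(ψ_{r(t)} ∘ φ_t)_t` of two families along a reparametrization `r`. -/
def compAlong (ψ : ℝ≥0 → B → D) (r : ℝ≥0 → ℝ≥0) (φ : ℝ≥0 → A → B) : ℝ≥0 → A → D :=
  fun t a => ψ (r t) (φ t a)

/-- `F` is the Connes–Higson composition `[[A,B]] × [[B,D]] → [[A,D]]`: for all representatives
`φ, ψ` there is `r₀` such that for every reparametrization `r ≥ r₀`, the family
`(ψ_{r(t)} ∘ φ_t)_t` is an asymptotic morphism whose class is `F [[φ]] [[ψ]]`. -/
def IsCHComposition (F : AsympClass A B → AsympClass B D → AsympClass A D) : Prop :=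
  ∀ (φ : AsymptoticMorphism A B) (ψ : AsymptoticMorphism B D),
    ∃ r₀ : ℝ≥0 → ℝ≥0, ∀ r : ℝ≥0 → ℝ≥0, IsReparam r → (∀ t, r₀ t ≤ r t) →
      ∃ hr : IsAsymptoticMorphism (compAlong ψ.toFun r φ.toFun),
        F (AsympClass.mk φ) (AsympClass.mk ψ) = AsympClass.mk ⟨compAlong ψ.toFun r φ.toFun, hr⟩

end CH

section Ev

/-- Evaluation at a point, as a ⋆-homomorphism `C(X, B) → B`. -/
def evCM (X : Type w) [TopologicalSpace X] [CompactSpace X]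
    (B : Type v) [NonUnitalCStarAlgebra B] (x : X) : C(X, B) →⋆ₙₐ[ℂ] B where
  toFun f := f x
  map_smul' _ _ := rfl
  map_zero' := rfl
  map_add' _ _ := rfl
  map_mul' _ _ := rfl
  map_star' _ := rfl

end Ev

end AsymPaper


open AsymPaper Filter Topology TopologicalSpace
open scoped NNReal ZeroAtInfty OnePoint CStarAlgebra

universe u v w

/-!
Replace `(B_n, β_n)` by its mapping telescope. An element of stage `m` is a bounded sequence
`(b_k)_{k ≥ m}` with `b_k ∈ B_k`, together with a path `f : [0,1] → B` that is constant on
`[0, t_m]` and passes through `ι_k b_k` at each knot `t_k = 1 - 2^{-k}`, `k ≥ m` (more precisely,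
a limit of such pairs whose sequence is eventually compatible with the `β_k`). The connecting
map forgets `b_m` and the path before `t_{m+1}`; it is onto because a path can be damped to `0`
before `t_m`. Evaluating the path at `1` exhibits `B` as the limit of the telescope, so
semiprojectivity lifts `α` to some stage `n`. The coordinate `b_n` of the lift is `α̃`, and its
path is a homotopy from `ι_n ∘ α̃` to `α`.
-/

open unitInterval

namespace AsymPaper

section InductiveSystem

variable {B : ℕ → Type*} [∀ n, NonUnitalCStarAlgebra (B n)]
  (β : ∀ n, B n →⋆ₙₐ[ℂ] B (n + 1))

theorem transit_self {n : ℕ} (h : n ≤ n) (b : B n) : transit β h b = b :=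
  Nat.leRecOn_self b

theorem transit_succ {n m : ℕ} (h : n ≤ m) (h' : n ≤ m + 1) (b : B n) :
    transit β h' b = β m (transit β h b) :=
  Nat.leRecOn_succ h b

theorem norm_transit_le {n m : ℕ} (h : n ≤ m) (b : B n) : ‖transit β h b‖ ≤ ‖b‖ := by
  induction m, h using Nat.le_induction with
  | base => rw [transit_self]
  | succ m hnm ih =>
    rw [transit_succ β hnm]
    exact (NonUnitalStarAlgHom.norm_apply_le _ _).trans ih

theorem eq_transit_of_compatible {b : ∀ n, B n} {K : ℕ}
    (hb : ∀ k, K ≤ k → b (k + 1) = β k (b k)) (j : ℕ) :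
    b (K + j) = transit β (Nat.le_add_right K j) (b K) := by
  induction j with
  | zero => exact (transit_self β _ _).symm
  | succ j ih =>
    show b (K + j + 1) = _
    rw [hb _ (Nat.le_add_right K j), ih, transit_succ β (Nat.le_add_right K j)]

variable {L : Type*} [NonUnitalCStarAlgebra L] {ι : ∀ n, B n →⋆ₙₐ[ℂ] L}

theorem map_transit (hι : ∀ n, (ι (n + 1)).comp (β n) = ι n) {n m : ℕ} (h : n ≤ m)
    (b : B n) : ι m (transit β h b) = ι n b := by
  induction m, h using Nat.le_induction with
  | base => rw [transit_self]
  | succ m hnm ih =>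
    rw [transit_succ β hnm, ← ih, ← hι m, NonUnitalStarAlgHom.comp_apply]

theorem map_eq_of_compatible (hι : ∀ n, (ι (n + 1)).comp (β n) = ι n) {b : ∀ n, B n}
    {K k : ℕ} (hb : ∀ k, K ≤ k → b (k + 1) = β k (b k)) (hk : K ≤ k) :
    ι k (b k) = ι K (b K) := by
  obtain ⟨j, rfl⟩ := Nat.exists_eq_add_of_le hk
  rw [eq_transit_of_compatible β hb, map_transit β hι]

theorem IsInductiveLimit.tendsto_norm_of_compatible (hlim : IsInductiveLimit β L ι)
    {b : ∀ n, B n} {K : ℕ} (hb : ∀ k, K ≤ k → b (k + 1) = β k (b k)) :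
    Tendsto (fun k => ‖b k‖) atTop (𝓝 ‖ι K (b K)‖) := by
  rw [← tendsto_add_atTop_iff_nat K]
  refine (hlim.2.2 K (b K)).congr fun j => ?_
  rw [add_comm j, eq_transit_of_compatible β hb]

end InductiveSystem

section Interval

def knot (k : ℕ) : I :=
  ⟨1 - 2⁻¹ ^ k, sub_nonneg.mpr (pow_le_one₀ (by norm_num) (by norm_num)),
    sub_le_self _ (by positivity)⟩

theorem knot_mono : Monotone knot := fun k l h => by
  show 1 - (2⁻¹ : ℝ) ^ k ≤ 1 - 2⁻¹ ^ l
  gcongr 1 - ?_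
  exact pow_le_pow_of_le_one (by norm_num) (by norm_num) h

theorem knot_lt_knot_succ (k : ℕ) : knot k < knot (k + 1) := by
  show 1 - (2⁻¹ : ℝ) ^ k < 1 - 2⁻¹ ^ (k + 1)
  gcongr 1 - ?_
  exact pow_lt_pow_right_of_lt_one₀ (by norm_num) (by norm_num) k.lt_succ_self

theorem tendsto_knot : Tendsto knot atTop (𝓝 1) := by
  rw [Topology.IsInducing.subtypeVal.tendsto_nhds_iff]
  have h := (tendsto_pow_atTop_nhds_zero_of_lt_one (by norm_num : (0 : ℝ) ≤ 2⁻¹)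
    (by norm_num)).const_sub (1 : ℝ)
  rwa [sub_zero] at h

def maxWith (c : I) : C(I, I) := ⟨fun s => max s c, by fun_prop⟩

@[simp] theorem maxWith_apply (c s : I) : maxWith c s = max s c := rfl

theorem continuous_maxWith : Continuous maxWith :=
  ContinuousMap.continuous_of_continuous_uncurry _ (by dsimp [Function.uncurry]; fun_prop)

theorem tendsto_norm_comp_maxWith {E : Type*} [NormedAddCommGroup E] (f : C(I, E)) :
    Tendsto (fun M => ‖f.comp (maxWith (knot M))‖) atTop (𝓝 ‖f 1‖) := by
  have hlim : Tendsto (fun M => f.comp (maxWith (knot M))) atTop (𝓝 (f.comp (maxWith 1))) :=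
    ((ContinuousMap.continuous_postcomp f).tendsto _).comp
      ((continuous_maxWith.tendsto 1).comp tendsto_knot)
  have hnorm : ‖f.comp (maxWith 1)‖ = ‖f 1‖ := by
    refine le_antisymm ((ContinuousMap.norm_le _ (norm_nonneg _)).2 fun s => ?_) ?_
    · simp [max_eq_right le_one']
    · simpa [max_eq_right le_one'] using ContinuousMap.norm_coe_le_norm (f.comp (maxWith 1)) 1
  exact hnorm ▸ hlim.norm

theorem exists_cutoff (E : Type*) [NormedAddCommGroup E] [NormedSpace ℝ E] {a b : I}
    (hab : a < b) :
    ∃ R : C(I, E) → C(I, E), Continuous R ∧ (∀ g s, s ≤ a → R g s = 0) ∧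
      ∀ g s, b ≤ s → R g s = g s := by
  obtain ⟨ρ, hρa, hρb, -⟩ := exists_continuous_zero_one_of_isClosed isClosed_Iic isClosed_Ici
    (Set.Iic_disjoint_Ici.mpr (not_le.mpr hab))
  refine ⟨fun g => ⟨fun s => ρ s • g s, by fun_prop⟩,
    ContinuousMap.continuous_of_continuous_uncurry _ (by dsimp [Function.uncurry]; fun_prop),
    fun g s hs => ?_, fun g s hs => ?_⟩
  · simp [hρa (Set.mem_Iic.mpr hs)]
  · simp [hρb (Set.mem_Ici.mpr hs)]

def precomp {E : Type*} [NonUnitalCStarAlgebra E] (f : C(I, I)) :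
    C(I, E) →⋆ₙₐ[ℂ] C(I, E) where
  toFun g := g.comp f
  map_smul' _ _ := rfl
  map_zero' := rfl
  map_add' _ _ := rfl
  map_mul' _ _ := rfl
  map_star' _ := rfl

end Interval

section Sequences

variable {B : ℕ → Type*} [∀ n, NonUnitalCStarAlgebra (B n)]

def lpEval (k : ℕ) : lp (fun k => B k) ⊤ →⋆ₙₐ[ℂ] B k where
  toFun x := x k
  map_smul' _ _ := rfl
  map_zero' := rfl
  map_add' _ _ := rfl
  map_mul' _ _ := rfl
  map_star' _ := rfl

def zeroBelow (M : ℕ) : lp (fun k => B k) ⊤ →⋆ₙₐ[ℂ] lp (fun k => B k) ⊤ where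
  toFun x := ⟨fun k => if k < M then 0 else x k, memℓp_infty ⟨‖x‖, by
    rintro - ⟨k, rfl⟩
    by_cases h : k < M
    · simp [h]
    · simpa [h] using lp.norm_apply_le_norm ENNReal.top_ne_zero x k⟩⟩
  map_smul' c x := lp.ext <| funext fun k => by by_cases h : k < M <;> simp [h]
  map_zero' := lp.ext <| funext fun k => by by_cases h : k < M <;> simp [h]
  map_add' x y := lp.ext <| funext fun k => by
    change (if k < M then 0 else (x + y) k) =
      (if k < M then 0 else x k) + (if k < M then 0 else y k)
    by_cases h : k < M <;> simp [h]
  map_mul' x y := lp.ext <| funext fun k => by by_cases h : k < M <;> simp [h, lp.infty_coeFn_mul]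
  map_star' x := lp.ext <| funext fun k => by by_cases h : k < M <;> simp [h]

theorem zeroBelow_apply (M : ℕ) (x : lp (fun k => B k) ⊤) (k : ℕ) :
    zeroBelow M x k = if k < M then 0 else x k := rfl

theorem tendsto_norm_zeroBelow {x : lp (fun k => B k) ⊤} {L : ℝ}
    (hx : Tendsto (fun k => ‖x k‖) atTop (𝓝 L)) :
    Tendsto (fun M => ‖zeroBelow M x‖) atTop (𝓝 L) := by
  have hcoord (M : ℕ) : ‖x M‖ ≤ ‖zeroBelow M x‖ := by
    simpa [zeroBelow_apply] using lp.norm_apply_le_norm ENNReal.top_ne_zero (zeroBelow M x) M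
  refine tendsto_order.2 ⟨fun a ha => (hx.eventually (lt_mem_nhds ha)).mono fun M hM =>
    hM.trans_le (hcoord M), fun a ha => ?_⟩
  obtain ⟨c, hLc, hca⟩ := exists_between ha
  obtain ⟨N, hN⟩ := eventually_atTop.1 (hx.eventually (gt_mem_nhds hLc))
  have hc : 0 ≤ c := (ge_of_tendsto' hx fun _ => norm_nonneg _).trans hLc.le
  refine eventually_atTop.2
    ⟨N, fun M hM => (lp.norm_le_of_forall_le hc fun k => ?_).trans_lt hca⟩
  rw [zeroBelow_apply]
  split_ifs with hk
  · simpa using hc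
  · exact (hN k (by omega)).le

end Sequences

namespace Telescope

variable {B : ℕ → Type*} [∀ n, NonUnitalCStarAlgebra (B n)]
  {BL : Type*} [NonUnitalCStarAlgebra BL]

abbrev Ambient (B : ℕ → Type*) [∀ n, NonUnitalCStarAlgebra (B n)]
    (BL : Type*) [NonUnitalCStarAlgebra BL] :=
  lp (fun k => B k) ⊤ × C(I, BL)

def cut (M : ℕ) : Ambient B BL →⋆ₙₐ[ℂ] Ambient B BL :=
  ((zeroBelow M).comp (NonUnitalStarAlgHom.fst ℂ _ _)).prod
    ((precomp (maxWith (knot M))).comp (NonUnitalStarAlgHom.snd ℂ _ _))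

@[simp] theorem cut_fst_apply (M : ℕ) (x : Ambient B BL) (k : ℕ) :
    (cut M x).1 k = if k < M then 0 else x.1 k := rfl

@[simp] theorem cut_snd_apply (M : ℕ) (x : Ambient B BL) (s : I) :
    (cut M x).2 s = x.2 (max s (knot M)) := rfl

theorem cut_cut {N M : ℕ} (h : N ≤ M) (x : Ambient B BL) : cut M (cut N x) = cut M x := by
  refine Prod.ext (lp.ext <| funext fun k => ?_) (ContinuousMap.ext fun s => ?_)
  · change (if k < M then 0 else (cut N x).1 k) = _
    simp only [cut_fst_apply]
    split_ifs <;> first | rfl | omega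
  · simp only [cut_snd_apply]
    rw [max_eq_left ((knot_mono h).trans (le_max_right _ _))]

variable (β : ∀ n, B n →⋆ₙₐ[ℂ] B (n + 1)) (ι : ∀ n, B n →⋆ₙₐ[ℂ] BL)

def pinned (m : ℕ) : NonUnitalStarSubalgebra ℂ (Ambient B BL) where
  carrier := {x | cut m x = x ∧ ∀ k, m ≤ k → x.2 (knot k) = ι k (x.1 k)}
  add_mem' := by
    rintro x y ⟨hx, hx'⟩ ⟨hy, hy'⟩
    exact ⟨by rw [map_add, hx, hy], fun k hk => by simp [hx' k hk, hy' k hk]⟩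
  zero_mem' := ⟨map_zero _, fun k _ => by simp⟩
  mul_mem' := by
    rintro x y ⟨hx, hx'⟩ ⟨hy, hy'⟩
    exact ⟨by rw [map_mul, hx, hy],
      fun k hk => by simp [hx' k hk, hy' k hk, lp.infty_coeFn_mul]⟩
  smul_mem' := by
    rintro c x ⟨hx, hx'⟩
    exact ⟨by rw [map_smul, hx], fun k hk => by simp [hx' k hk]⟩
  star_mem' := by
    rintro x ⟨hx, hx'⟩
    exact ⟨by rw [map_star, hx], fun k hk => by simp [hx' k hk, map_star]⟩

def eventuallyCompatible : NonUnitalStarSubalgebra ℂ (Ambient B BL) where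
  carrier := {x | ∀ᶠ k in atTop, x.1 (k + 1) = β k (x.1 k)}
  add_mem' hx hy := (hx.and hy).mono fun k h => by simp [h.1, h.2]
  zero_mem' := .of_forall fun k => by simp
  mul_mem' hx hy := (hx.and hy).mono fun k h => by simp [h.1, h.2, lp.infty_coeFn_mul]
  smul_mem' c x hx := hx.mono fun k h => by simp [h]
  star_mem' hx := hx.mono fun k h => by simp [h, map_star]

theorem isClosed_pinned (m : ℕ) : IsClosed (pinned ι m : Set (Ambient B BL)) := by
  change IsClosed
    {x : Ambient B BL | cut m x = x ∧ ∀ k, m ≤ k → x.2 (knot k) = ι k (x.1 k)}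
  simp only [Set.ofPred_and, Set.ofPred_forall]
  exact (isClosed_eq (map_continuous _) continuous_id).inter <| isClosed_iInter fun k =>
    isClosed_iInter fun _ => isClosed_eq (by fun_prop)
      ((map_continuous (ι k)).comp ((map_continuous (lpEval k)).comp continuous_fst))

/-- Eventual compatibility is not a closed condition, but it is what makes the norms of the
coordinates converge to the norm of the endpoint of the path (`tendsto_norm_cut_of_mem`). -/
def stage (m : ℕ) : NonUnitalStarSubalgebra ℂ (Ambient B BL) :=
  (pinned ι m ⊓ eventuallyCompatible β).topologicalClosure

instance isClosed_stage (m : ℕ) : IsClosed (stage β ι m : Set (Ambient B BL)) :=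
  NonUnitalStarSubalgebra.isClosed_topologicalClosure _

theorem stage_le_pinned (m : ℕ) : stage β ι m ≤ pinned ι m :=
  NonUnitalStarSubalgebra.topologicalClosure_minimal _ inf_le_left (isClosed_pinned ι m)

theorem cut_eq_self {m : ℕ} {x : Ambient B BL} (hx : x ∈ stage β ι m) : cut m x = x :=
  (stage_le_pinned β ι m hx).1

theorem snd_zero_of_mem_stage {m : ℕ} {x : Ambient B BL} (hx : x ∈ stage β ι m) :
    x.2 0 = ι m (x.1 m) :=
  calc x.2 0 = (cut m x).2 0 := by rw [cut_eq_self β ι hx]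
    _ = x.2 (knot m) := by rw [cut_snd_apply, max_eq_right unitInterval.nonneg']
    _ = ι m (x.1 m) := (stage_le_pinned β ι m hx).2 m le_rfl

theorem mapsTo_cut {m M : ℕ} (h : m ≤ M) :
    Set.MapsTo (cut M) (↑(pinned ι m ⊓ eventuallyCompatible β) : Set (Ambient B BL))
      ↑(pinned ι M ⊓ eventuallyCompatible β) := by
  rintro x ⟨⟨-, hx⟩, hx'⟩
  refine ⟨⟨cut_cut le_rfl x, fun k hk => ?_⟩, ?_⟩
  · simp [max_eq_left (knot_mono hk), hx k (h.trans hk), not_lt.mpr hk]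
  · filter_upwards [hx', eventually_ge_atTop M] with k hk hkM
    simp [hk, not_lt.mpr hkM, not_lt.mpr (hkM.trans k.le_succ)]

theorem cut_mem_stage {m M : ℕ} (h : m ≤ M) {x : Ambient B BL} (hx : x ∈ stage β ι m) :
    cut M x ∈ stage β ι M :=
  map_mem_closure (map_continuous _) hx (mapsTo_cut β ι h)

def bond (m : ℕ) : stage β ι m →⋆ₙₐ[ℂ] stage β ι (m + 1) :=
  NonUnitalStarAlgHom.codRestrict
    ((cut (m + 1)).comp (NonUnitalStarSubalgebraClass.subtype (stage β ι m)))
    (stage β ι (m + 1))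
    fun x : stage β ι m => cut_mem_stage β ι m.le_succ x.2

def limitMap (m : ℕ) : stage β ι m →⋆ₙₐ[ℂ] BL :=
  (evCM I BL 1).comp
    ((NonUnitalStarAlgHom.snd ℂ _ _).comp (NonUnitalStarSubalgebraClass.subtype _))

theorem coe_transit_bond {m : ℕ} (x : stage β ι m) (j : ℕ) :
    (transit (bond β ι) (Nat.le_add_right m j) x : Ambient B BL) = cut (m + j) x := by
  induction j with
  | zero => rw [transit_self]; exact (cut_eq_self β ι x.2).symm
  | succ j ih =>
    rw [transit_succ (bond β ι) (Nat.le_add_right m j)]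
    exact (congrArg (cut (m + j + 1)) ih).trans (cut_cut (Nat.le_succ _) _)

theorem limitMap_comp_bond (m : ℕ) :
    (limitMap β ι (m + 1)).comp (bond β ι m) = limitMap β ι m := by
  ext x
  exact congrArg x.1.2 (max_eq_left le_one')

/-- Damping the path to `0` before `knot m` turns an element of stage `m + 1` into one of
stage `m` with the same image. -/
theorem bond_surjective (m : ℕ) : Function.Surjective (bond β ι m) := by
  obtain ⟨R, hRc, hR0, hR1⟩ := exists_cutoff BL (knot_lt_knot_succ m)
  let damp : Ambient B BL → Ambient B BL := fun x => (x.1, R x.2)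
  have hcut (x : Ambient B BL) : cut (m + 1) (damp x) = cut (m + 1) x :=
    Prod.ext rfl (ContinuousMap.ext fun s => hR1 _ _ (le_max_right _ _))
  have hmaps : Set.MapsTo damp ↑(pinned ι (m + 1) ⊓ eventuallyCompatible β)
      ↑(pinned ι m ⊓ eventuallyCompatible β) := by
    rintro x ⟨⟨hx, hx'⟩, hc⟩
    have hlow : ∀ k < m + 1, x.1 k = 0 := fun k hk => by rw [← hx, cut_fst_apply, if_pos hk]
    refine ⟨⟨Prod.ext (lp.ext <| funext fun k => ?_) (ContinuousMap.ext fun s => ?_),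
      fun k hk => ?_⟩, hc⟩
    · change (if k < m then 0 else x.1 k) = x.1 k
      split_ifs with h
      · exact (hlow k (by omega)).symm
      · rfl
    · change R x.2 (max s (knot m)) = R x.2 s
      rcases le_total s (knot m) with h | h
      · rw [hR0 _ _ (max_le h le_rfl), hR0 _ _ h]
      · rw [max_eq_left h]
    · rcases hk.eq_or_lt with rfl | hk
      · change R x.2 (knot m) = ι m (x.1 m)
        rw [hR0 _ _ le_rfl, hlow m m.lt_succ_self, map_zero]
      · exact (hR1 _ _ (knot_mono hk)).trans (hx' k hk)
  intro y
  have hdamp : Continuous damp := continuous_fst.prodMk (hRc.comp continuous_snd)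
  refine ⟨⟨damp y, map_mem_closure hdamp y.2 hmaps⟩, Subtype.ext ?_⟩
  exact (hcut y).trans (cut_eq_self β ι y.2)

theorem tendsto_norm_cut_of_mem (hlim : IsInductiveLimit β BL ι) {m : ℕ} {x : Ambient B BL}
    (hx : x ∈ pinned ι m ⊓ eventuallyCompatible β) :
    Tendsto (fun M => ‖cut M x‖) atTop (𝓝 ‖x.2 1‖) := by
  obtain ⟨⟨-, hknot⟩, hcompat⟩ := hx
  obtain ⟨K, hK⟩ := eventually_atTop.1 (hcompat.and (eventually_ge_atTop m))
  have hb : ∀ k, K ≤ k → x.1 (k + 1) = β k (x.1 k) := fun k hk => (hK k hk).1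
  have hval : x.2 1 = ι K (x.1 K) := by
    refine tendsto_nhds_unique ((x.2.continuous.tendsto 1).comp tendsto_knot)
      (tendsto_const_nhds.congr' (eventually_atTop.2 ⟨K, fun k hk => ?_⟩))
    rw [Function.comp_apply, hknot k (hK k hk).2, map_eq_of_compatible β hlim.1 hb hk]
  have hcoord : Tendsto (fun k => ‖x.1 k‖) atTop (𝓝 ‖x.2 1‖) :=
    hval ▸ hlim.tendsto_norm_of_compatible β hb
  have hmax := (tendsto_norm_zeroBelow hcoord).max (tendsto_norm_comp_maxWith x.2)
  rw [max_self] at hmax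
  exact hmax.congr fun M => (Prod.norm_def (cut M x)).symm

/-- Each `x ↦ ‖cut M x‖` is `1`-Lipschitz, so the convergence passes to the closure. -/
theorem tendsto_norm_cut (hlim : IsInductiveLimit β BL ι) {m : ℕ} {x : Ambient B BL}
    (hx : x ∈ stage β ι m) : Tendsto (fun M => ‖cut M x‖) atTop (𝓝 ‖x.2 1‖) := by
  have hequi : Equicontinuous fun M (x : Ambient B BL) => ‖cut M x‖ :=
    Metric.equicontinuous_of_continuity_modulus id tendsto_id _ fun x y M =>
      calc dist ‖cut M x‖ ‖cut M y‖ ≤ ‖cut M (x - y)‖ := by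
            rw [map_sub]; exact dist_norm_norm_le _ _
        _ ≤ dist x y := (NonUnitalStarAlgHom.norm_apply_le _ _).trans (dist_eq_norm x y).ge
  exact closure_minimal (fun y hy => tendsto_norm_cut_of_mem β ι hlim hy)
    (hequi.isClosed_setOfPred_tendsto (by fun_prop)) hx

def tail (n : ℕ) (b : B n) : lp (fun k => B k) ⊤ :=
  ⟨fun k => if h : n ≤ k then transit β h b else 0, memℓp_infty ⟨‖b‖, by
    rintro - ⟨k, rfl⟩
    by_cases h : n ≤ k
    · simpa [h] using norm_transit_le β h b
    · simp [h]⟩⟩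

theorem tail_apply (n : ℕ) (b : B n) (k : ℕ) :
    tail β n b k = if h : n ≤ k then transit β h b else 0 := rfl

theorem tail_const_mem (hι : ∀ n, (ι (n + 1)).comp (β n) = ι n) (n : ℕ) (b : B n) :
    ((tail β n b, ContinuousMap.const I (ι n b)) : Ambient B BL) ∈
      pinned ι n ⊓ eventuallyCompatible β := by
  refine ⟨⟨Prod.ext (lp.ext <| funext fun k => ?_) rfl, fun k hk => ?_⟩,
    eventually_atTop.2 ⟨n, fun k hk => ?_⟩⟩
  · change (if k < n then 0 else tail β n b k) = tail β n b k
    rw [tail_apply]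
    split_ifs <;> first | rfl | omega
  · change ι n b = ι k (dite _ _ _)
    rw [dif_pos hk, map_transit β hι]
  · change dite _ _ _ = β k (dite _ _ _)
    rw [dif_pos (hk.trans k.le_succ), dif_pos hk, transit_succ β hk]

theorem dense_iUnion_range_limitMap (hι : ∀ n, (ι (n + 1)).comp (β n) = ι n)
    (hdense : Dense (⋃ n, Set.range (ι n))) : Dense (⋃ m, Set.range (limitMap β ι m)) := by
  refine hdense.mono (Set.iUnion_subset fun n => ?_)
  rintro - ⟨b, rfl⟩
  exact Set.mem_iUnion.2 ⟨n, ⟨_, subset_closure (tail_const_mem β ι hι n b)⟩, rfl⟩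

theorem isInductiveLimit_stage (hlim : IsInductiveLimit β BL ι) :
    IsInductiveLimit (bond β ι) BL (limitMap β ι) := by
  refine ⟨limitMap_comp_bond β ι, dense_iUnion_range_limitMap β ι hlim.1 hlim.2.1,
    fun m x => ?_⟩
  refine ((tendsto_norm_cut β ι hlim x.2).comp (tendsto_add_atTop_nat m)).congr fun j => ?_
  rw [Function.comp_apply, add_comm, ← coe_transit_bond β ι x j]
  rfl

end Telescope

end AsymPaper

open AsymPaper.Telescope

theorem stmt_6_general {A : Type u} {BL : Type u} [NonUnitalCStarAlgebra A] [NonUnitalCStarAlgebra BL]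
    {B : ℕ → Type u} [∀ n, NonUnitalCStarAlgebra (B n)]
    (β : ∀ n, B n →⋆ₙₐ[ℂ] B (n + 1)) (ι : ∀ n, B n →⋆ₙₐ[ℂ] BL)
    (hlim : IsInductiveLimit β BL ι)
    (α : A →⋆ₙₐ[ℂ] BL) (hα : IsSemiprojective.{u} α) :
    ∃ (n : ℕ) (α' : A →⋆ₙₐ[ℂ] B n), HomHomotopic ((ι n).comp α') α := by
  obtain ⟨n, ψ, hψ⟩ := hα (fun m => stage β ι m) (bond β ι) BL (limitMap β ι)
    (bond_surjective β ι) (isInductiveLimit_stage β ι hlim) (NonUnitalStarAlgHom.id ℂ BL)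
  let lift := (NonUnitalStarSubalgebraClass.subtype (stage β ι n)).comp ψ
  exact ⟨n, (lpEval n).comp ((NonUnitalStarAlgHom.fst ℂ _ _).comp lift),
    (NonUnitalStarAlgHom.snd ℂ _ _).comp lift, fun a => snd_zero_of_mem_stage β ι (ψ a).2,
    fun a => DFunLike.congr_fun hψ a⟩

/-- If `B` is the limit of an inductive system `(B_n, β_n)` and `α : A → B` is
semiprojective, then there are `n` and `α̃ : A → B_n` such that `β_{∞,n} ∘ α̃` is homotopic
to `α`. -/
theorem stmt_6 {A : Type u} {BL : Type u} [NonUnitalCStarAlgebra A] [NonUnitalCStarAlgebra BL]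
    [SeparableSpace A] [SeparableSpace BL]
    {B : ℕ → Type u} [∀ n, NonUnitalCStarAlgebra (B n)]
    (β : ∀ n, B n →⋆ₙₐ[ℂ] B (n + 1)) (ι : ∀ n, B n →⋆ₙₐ[ℂ] BL)
    (hlim : IsInductiveLimit β BL ι)
    (α : A →⋆ₙₐ[ℂ] BL) (hα : IsSemiprojective.{u} α) :
    ∃ (n : ℕ) (α' : A →⋆ₙₐ[ℂ] B n), HomHomotopic ((ι n).comp α') α :=
  stmt_6_general β ι hlim α hα
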